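/- Let C ⊆ F_2^n be a linear code, W(k) ⊆ [n]^k a (1−2ζ, η)-parity sampler for some ζ < 1/2 and η < 1/4, ỹ ∈ F_2^{W(k)}, and L the set of codewords z ∈ C with Δ(dsum_W(z), ỹ) ≤ 1/2 − √η. Suppose L' is a finite set of words in F_2^n such that (a) every z ∈ L has some z' ∈ L' with bias(z − z') > 1 − 2ζ, and (b) Δ(dsum_W(z'), ỹ) ≤ 1/2 − √η for all z' ∈ L'. Then there exists L'' ⊆ L' with |L''| ≤ 1/η such that every z ∈ L has some z'' ∈ L'' with Δ(z, z'') < 2ζ or Δ(z, z'') > 1 − 2ζ. -/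

import Mathlib

/-!
Choose `L'' ⊆ L'` greedily so that its members are pairwise far up to complement (bias of the
difference at most `1 - 2ζ`) while every member of `L'` equals or is `ζ`-near up to complement to
one of them. Over `F_2` also `Δ(x, z) ≤ (1 - Δ(x, y)) + (1 - Δ(y, z))`, so nearness up to complement
composes like the triangle inequality and `L''` is a `2ζ`-cover of `L`. For the size bound, the
parity sampler makes the `±1` encodings `v` of the lifts of the members of `L''` pairwise almost
orthogonal (`⟪v, v'⟫ ≤ η N`), while each has correlation at least `2√η N` with the encoding `u` of
`ỹ`; expanding `0 ≤ ‖∑ (v - √η u)‖²` gives `|L''| ≤ 1/η`, as in the Johnson bound.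
-/

/-- The bias of a word `z ∈ F_2^n`. -/
noncomputable def bias (n : ℕ) (z : Fin n → ZMod 2) : ℝ :=
  |(∑ i, (-1 : ℝ) ^ (z i).val) / n|

/-- The direct sum lifting. -/
def dsum {n k : ℕ} (W : Finset (Fin k → Fin n)) (z : Fin n → ZMod 2) :
    {w // w ∈ W} → ZMod 2 :=
  fun w => ∑ i, z (w.1 i)

/-- Bias of a lifted word. -/
noncomputable def biasW {n k : ℕ} (W : Finset (Fin k → Fin n))
    (y : {w // w ∈ W} → ZMod 2) : ℝ :=
  |(∑ w : {w // w ∈ W}, (-1 : ℝ) ^ (y w).val) / W.card|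

/-- Normalized Hamming distance on `F_2^n`. -/
noncomputable def hdist {n : ℕ} (x y : Fin n → ZMod 2) : ℝ :=
  ((Finset.univ.filter fun i => x i ≠ y i).card : ℝ) / n

/-- Normalized Hamming distance on `F_2^{W(k)}`. -/
noncomputable def hdistW {n k : ℕ} (W : Finset (Fin k → Fin n))
    (x y : {w // w ∈ W} → ZMod 2) : ℝ :=
  ((Finset.univ.filter fun w => x w ≠ y w).card : ℝ) / W.card

open Finset
open scoped RealInnerProductSpace

lemma Finset.exists_pairwise_dominating_subset {α : Type*} [DecidableEq α] (r : α → α → Prop)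
    (hr : ∀ x y, r x y → r y x) (s : Finset α) :
    ∃ t ⊆ s, (t : Set α).Pairwise (fun x y => ¬ r x y) ∧ ∀ x ∈ s, ∃ y ∈ t, x = y ∨ r x y := by
  induction s using Finset.induction_on with
  | empty => exact ⟨∅, subset_rfl, by simp, by simp⟩
  | insert a s _ ih =>
    obtain ⟨t, hts, ht_indep, ht_dom⟩ := ih
    by_cases ha : ∃ y ∈ t, a = y ∨ r a y
    · refine ⟨t, hts.trans (subset_insert a s), ht_indep, ?_⟩
      simpa only [forall_mem_insert] using ⟨ha, ht_dom⟩
    · push Not at ha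
      refine ⟨insert a t, insert_subset_insert a hts, ?_, ?_⟩
      · rw [coe_insert]
        exact ht_indep.insert fun y hy _ => ⟨(ha y hy).2, fun hya => (ha y hy).2 (hr _ _ hya)⟩
      · refine (forall_mem_insert _ _ _).2 ⟨⟨a, mem_insert_self a t, Or.inl rfl⟩, fun x hx => ?_⟩
        obtain ⟨y, hy, hxy⟩ := ht_dom x hx
        exact ⟨y, mem_insert_of_mem hy, hxy⟩

lemma neg_one_pow_val_sub (a b : ZMod 2) :
    (-1 : ℝ) ^ (a - b).val = (-1) ^ a.val * (-1) ^ b.val := by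
  rw [← pow_add, neg_one_pow_eq_pow_mod_two, neg_one_pow_eq_pow_mod_two (n := a.val + b.val)]
  congr 1
  revert a b
  decide

lemma neg_one_pow_val_sub_eq_ite (a b : ZMod 2) :
    (-1 : ℝ) ^ (a - b).val = 1 - 2 * if a ≠ b then 1 else 0 := by
  by_cases hab : a = b
  · simp [hab]
  · have hsub : a - b = 1 := by revert a b; decide
    norm_num [hab, hsub, ZMod.val_one]

section HammingZMod2

variable {ι : Type*} [Fintype ι]

lemma sum_neg_one_pow_val_sub (x y : ι → ZMod 2) :
    ∑ i, (-1 : ℝ) ^ ((x - y) i).val = Fintype.card ι - 2 * hammingDist x y := by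
  simp only [Pi.sub_apply, neg_one_pow_val_sub_eq_ite, sum_sub_distrib, ← mul_sum, sum_boole]
  simp [hammingDist]

lemma hammingDist_add_one_add_hammingDist (x y : ι → ZMod 2) :
    hammingDist x (y + 1) + hammingDist x y = Fintype.card ι := by
  have hflip : ∀ a b : ZMod 2, a ≠ b + 1 ↔ a = b := by decide
  simp only [hammingDist, Pi.add_apply, Pi.one_apply, hflip]
  exact card_filter_add_card_filter_not _

def signVec (x : ι → ZMod 2) : EuclideanSpace ℝ ι :=
  WithLp.toLp 2 fun i => (-1 : ℝ) ^ (x i).val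

lemma inner_signVec (x y : ι → ZMod 2) :
    ⟪signVec x, signVec y⟫ = Fintype.card ι - 2 * hammingDist x y := by
  simp only [signVec, PiLp.inner_apply, RCLike.inner_apply, conj_trivial]
  rw [← sum_neg_one_pow_val_sub]
  simp [neg_one_pow_val_sub, mul_comm]

lemma norm_signVec_sq (x : ι → ZMod 2) : ‖signVec x‖ ^ 2 = Fintype.card ι := by
  rw [← real_inner_self_eq_norm_sq, inner_signVec, hammingDist_self]
  simp

end HammingZMod2

section hdist

variable {n : ℕ}

lemma hdist_eq (x y : Fin n → ZMod 2) : hdist x y = hammingDist x y / n := rfl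

lemma hdist_comm (x y : Fin n → ZMod 2) : hdist x y = hdist y x := by
  rw [hdist_eq, hdist_eq, hammingDist_comm]

lemma hdist_nonneg (x y : Fin n → ZMod 2) : 0 ≤ hdist x y := by
  rw [hdist_eq]; positivity

lemma hdist_le_one (x y : Fin n → ZMod 2) : hdist x y ≤ 1 := by
  rw [hdist_eq]
  refine div_le_one_of_le₀ ?_ n.cast_nonneg
  exact_mod_cast (hammingDist_le_card_fintype.trans_eq (Fintype.card_fin n))

lemma hdist_triangle (x y z : Fin n → ZMod 2) : hdist x z ≤ hdist x y + hdist y z := by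
  simp only [hdist_eq, ← add_div]
  gcongr
  exact_mod_cast hammingDist_triangle x y z

lemma hdist_add_one (hn : 0 < n) (x y : Fin n → ZMod 2) : hdist x (y + 1) = 1 - hdist x y := by
  have hcard := hammingDist_add_one_add_hammingDist x y
  rw [Fintype.card_fin] at hcard
  rw [hdist_eq, hdist_eq, eq_sub_iff_add_eq, ← add_div, div_eq_one_iff_eq (by positivity)]
  exact_mod_cast hcard

lemma hdist_le_two_sub (hn : 0 < n) (x y z : Fin n → ZMod 2) :
    hdist x z ≤ 2 - hdist x y - hdist y z := by
  have h := hdist_triangle x (y + 1) z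
  rw [hdist_add_one hn, hdist_comm (y + 1), hdist_add_one hn, hdist_comm z] at h
  linarith

lemma bias_sub (hn : 0 < n) (x y : Fin n → ZMod 2) : bias n (x - y) = |1 - 2 * hdist x y| := by
  rw [bias, sum_neg_one_pow_val_sub, Fintype.card_fin, hdist_eq]
  field_simp

def NearUpToComplement (ζ : ℝ) (x y : Fin n → ZMod 2) : Prop :=
  hdist x y < ζ ∨ 1 - ζ < hdist x y

lemma lt_bias_sub_iff (hn : 0 < n) (ζ : ℝ) (x y : Fin n → ZMod 2) :
    1 - 2 * ζ < bias n (x - y) ↔ NearUpToComplement ζ x y := by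
  rw [bias_sub hn, lt_abs, NearUpToComplement]
  constructor <;> rintro (h | h) <;> [left; right; left; right] <;> linarith

namespace NearUpToComplement

variable {ζ ζ' : ℝ} {x y z : Fin n → ZMod 2}

lemma symm (h : NearUpToComplement ζ x y) : NearUpToComplement ζ y x := by
  rwa [NearUpToComplement, hdist_comm]

lemma pos (h : NearUpToComplement ζ x y) : 0 < ζ := by
  rcases h with h | h <;> linarith [hdist_nonneg x y, hdist_le_one x y]

lemma mono (h : NearUpToComplement ζ x y) (hζ : ζ ≤ ζ') : NearUpToComplement ζ' x y := by
  rcases h with h | h <;> [left; right] <;> linarith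

lemma trans (hn : 0 < n) (hxy : NearUpToComplement ζ x y) (hyz : NearUpToComplement ζ' y z) :
    NearUpToComplement (ζ + ζ') x z := by
  have t₁ := hdist_triangle x y z
  have t₂ := hdist_le_two_sub hn x y z
  have t₃ : hdist y z ≤ hdist x y + hdist x z := hdist_comm x y ▸ hdist_triangle y x z
  have t₄ : hdist x y ≤ hdist x z + hdist y z := hdist_comm z y ▸ hdist_triangle x z y
  rcases hxy with h | h <;> rcases hyz with h' | h'
  · left; linarith
  · right; linarith
  · right; linarith
  · left; linarith

end NearUpToComplement

end hdist

lemma johnson_bound {E ι : Type*} [NormedAddCommGroup E] [InnerProductSpace ℝ E]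
    (s : Finset ι) (v : ι → E) (u : E) {c η : ℝ} (hc : 0 < c) (hη : 0 < η)
    (hu : ‖u‖ ^ 2 ≤ c) (hv : ∀ i ∈ s, ‖v i‖ ^ 2 ≤ c)
    (hvu : ∀ i ∈ s, 2 * √η * c ≤ ⟪v i, u⟫)
    (hvv : ∀ i ∈ s, ∀ j ∈ s, i ≠ j → ⟪v i, v j⟫ ≤ η * c) :
    (#s : ℝ) ≤ 1 / η := by
  classical
  set F : ι → E := fun i => v i - √η • u
  have hsq : √η * √η = η := Real.mul_self_sqrt hη.le
  have hF : ∀ i j, ⟪F i, F j⟫ = ⟪v i, v j⟫ - √η * ⟪v i, u⟫ - √η * ⟪v j, u⟫ + η * ‖u‖ ^ 2 := by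
    intro i j
    simp only [F, inner_sub_left, inner_sub_right, real_inner_smul_left, real_inner_smul_right,
      real_inner_comm (v j) u]
    rw [real_inner_self_eq_norm_sq]
    linear_combination ‖u‖ ^ 2 * hsq
  have hFF : ∀ i ∈ s, ∀ j ∈ s, ⟪F i, F j⟫ ≤ -(2 * η * c) + if i = j then (1 - η) * c else 0 := by
    intro i hi j hj
    have hi' := mul_le_mul_of_nonneg_left (hvu i hi) (Real.sqrt_nonneg η)
    have hj' := mul_le_mul_of_nonneg_left (hvu j hj) (Real.sqrt_nonneg η)
    have hu' := mul_le_mul_of_nonneg_left hu hη.le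
    rw [hF]
    split_ifs with hij
    · subst hij
      rw [real_inner_self_eq_norm_sq]
      nlinarith [hv i hi]
    · nlinarith [hvv i hi j hj hij]
  have hsum : 0 ≤ (#s : ℝ) * ((1 - η) * c - #s * (2 * η * c)) := by
    calc (0 : ℝ) ≤ ⟪∑ i ∈ s, F i, ∑ j ∈ s, F j⟫ := real_inner_self_nonneg
      _ = ∑ i ∈ s, ∑ j ∈ s, ⟪F i, F j⟫ := by simp_rw [sum_inner, inner_sum]
      _ ≤ ∑ i ∈ s, ∑ j ∈ s, (-(2 * η * c) + if i = j then (1 - η) * c else 0) :=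
          sum_le_sum fun i hi => sum_le_sum fun j hj => hFF i hi j hj
      _ = _ := by
        simp only [sum_add_distrib, sum_neg_distrib, sum_const, nsmul_eq_mul, sum_ite_eq,
          sum_ite_mem, inter_self]
        ring
  rw [le_div_iff₀ hη]
  by_contra! hlarge
  have hpos : (0 : ℝ) < #s := by nlinarith
  nlinarith [mul_pos hpos hc]

section ParitySampler

variable {n k : ℕ} {W : Finset (Fin k → Fin n)}

lemma dsum_sub (x y : Fin n → ZMod 2) : dsum W (x - y) = dsum W x - dsum W y := by
  funext w
  simp [dsum, sum_sub_distrib]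

lemma hdistW_eq (a b : {w // w ∈ W} → ZMod 2) : hdistW W a b = hammingDist a b / #W := rfl

lemma inner_signVec_eq_card_mul (hW : W.Nonempty) (a b : {w // w ∈ W} → ZMod 2) :
    ⟪signVec a, signVec b⟫ = #W * (1 - 2 * hdistW W a b) := by
  have hcard : (0 : ℝ) < #W := by exact_mod_cast hW.card_pos
  rw [inner_signVec, Fintype.card_coe, hdistW_eq]
  field_simp

lemma biasW_sub (hW : W.Nonempty) (a b : {w // w ∈ W} → ZMod 2) :
    biasW W (a - b) = |1 - 2 * hdistW W a b| := by
  have hcard : (0 : ℝ) < #W := by exact_mod_cast hW.card_pos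
  rw [biasW, sum_neg_one_pow_val_sub, Fintype.card_coe, hdistW_eq]
  field_simp

lemma card_le_inv_of_parity_sampler {ζ η : ℝ} (hη : 0 < η) (hW : W.Nonempty)
    (hps : ∀ u : Fin n → ZMod 2, bias n u ≤ 1 - 2 * ζ → biasW W (dsum W u) ≤ η)
    (yt : {w // w ∈ W} → ZMod 2) (M : Finset (Fin n → ZMod 2))
    (hM_close : ∀ x ∈ M, hdistW W (dsum W x) yt ≤ 1 / 2 - √η)
    (hM_far : ∀ x ∈ M, ∀ y ∈ M, x ≠ y → bias n (x - y) ≤ 1 - 2 * ζ) :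
    (#M : ℝ) ≤ 1 / η := by
  have hcard : (0 : ℝ) < #W := by exact_mod_cast hW.card_pos
  have hnorm (a : {w // w ∈ W} → ZMod 2) : ‖signVec a‖ ^ 2 ≤ #W := by
    rw [norm_signVec_sq, Fintype.card_coe]
  refine johnson_bound M (fun x => signVec (dsum W x)) (signVec yt) hcard hη (hnorm yt)
    (fun x _ => hnorm _) (fun x hx => ?_) (fun x hx y hy hxy => ?_)
  · rw [inner_signVec_eq_card_mul hW]
    nlinarith [hM_close x hx]
  · have hxy := hps _ (hM_far x hx y hy hxy)
    rw [dsum_sub, biasW_sub hW] at hxy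
    rw [inner_signVec_eq_card_mul hW, mul_comm η]
    exact mul_le_mul_of_nonneg_left ((le_abs_self _).trans hxy) hcard.le

end ParitySampler

theorem stmt_12_general {n k : ℕ} (hn : 0 < n) (ζ η : ℝ)
    (hη0 : 0 < η)
    (W : Finset (Fin k → Fin n)) (hW : W.Nonempty)
    (hps : ∀ u : Fin n → ZMod 2, bias n u ≤ 1 - 2*ζ → biasW W (dsum W u) ≤ η)
    (C : Submodule (ZMod 2) (Fin n → ZMod 2))
    (yt : {w // w ∈ W} → ZMod 2)
    (L' : Finset (Fin n → ZMod 2))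
    (ha : ∀ z ∈ C, hdistW W (dsum W z) yt ≤ 1/2 - Real.sqrt η →
      ∃ z' ∈ L', 1 - 2*ζ < bias n (z - z'))
    (hb : ∀ z' ∈ L', hdistW W (dsum W z') yt ≤ 1/2 - Real.sqrt η) :
    ∃ L'' ⊆ L', (L''.card : ℝ) ≤ 1/η ∧
      ∀ z ∈ C, hdistW W (dsum W z) yt ≤ 1/2 - Real.sqrt η →
        ∃ z'' ∈ L'', hdist z z'' < 2*ζ ∨ 1 - 2*ζ < hdist z z'' := by
  classical
  obtain ⟨M, hML', hM_far, hM_dom⟩ :=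
    L'.exists_pairwise_dominating_subset (NearUpToComplement ζ) fun _ _ => .symm
  refine ⟨M, hML', card_le_inv_of_parity_sampler hη0 hW hps yt M (fun x hx => hb x (hML' hx))
    fun x hx y hy hxy => not_lt.1 (mt (lt_bias_sub_iff hn ζ x y).1 (hM_far hx hy hxy)), ?_⟩
  intro z hz hzL
  obtain ⟨z', hz'L', hzz'⟩ := ha z hz hzL
  rw [lt_bias_sub_iff hn] at hzz'
  obtain ⟨z'', hz''M, rfl | hz'z''⟩ := hM_dom z' hz'L'
  · exact ⟨z', hz''M, hzz'.mono (by linarith [hzz'.pos])⟩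
  · exact ⟨z'', hz''M, two_mul ζ ▸ hzz'.trans hn hz'z''⟩

/-- Cover compactness: if `W(k)` is a `(1-2ζ, η)`-parity sampler and `L'` is a `ζ`-cover
(condition (a)) of the list `L` of codewords whose lifts are within `1/2 - √η` of `yt`,
with every member of `L'` also close to `yt` (condition (b)), then there is
`L'' ⊆ L'` of size at most `1/η` which is a `2ζ`-cover of `L`. -/
theorem stmt_12 {n k : ℕ} (hn : 0 < n) (ζ η : ℝ)
    (hζ : ζ < 1/2) (hη0 : 0 < η) (hη : η < 1/4)
    (W : Finset (Fin k → Fin n)) (hW : W.Nonempty)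
    (hps : ∀ u : Fin n → ZMod 2, bias n u ≤ 1 - 2*ζ → biasW W (dsum W u) ≤ η)
    (C : Submodule (ZMod 2) (Fin n → ZMod 2))
    (yt : {w // w ∈ W} → ZMod 2)
    (L' : Finset (Fin n → ZMod 2))
    (ha : ∀ z ∈ C, hdistW W (dsum W z) yt ≤ 1/2 - Real.sqrt η →
      ∃ z' ∈ L', 1 - 2*ζ < bias n (z - z'))
    (hb : ∀ z' ∈ L', hdistW W (dsum W z') yt ≤ 1/2 - Real.sqrt η) :
    ∃ L'' ⊆ L', (L''.card : ℝ) ≤ 1/η ∧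
      ∀ z ∈ C, hdistW W (dsum W z) yt ≤ 1/2 - Real.sqrt η →
        ∃ z'' ∈ L'', hdist z z'' < 2*ζ ∨ 1 - 2*ζ < hdist z z'' :=
  stmt_12_general hn ζ η hη0 W hW hps C yt L' ha hb
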